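/- arXiv:2004.06768 — 6 statements merged into one kernel-verified Lean document; each statement's English description precedes it below -/
import Mathlib

section
/- For positive integers d, the number of pairs (L, g) where L is a subgroup of (ℤ/d)² of order d and g is a nonzero element of L equals (d-1)·σ₁(d). -/
/-!
A subgroup `L ≤ (ℤ/d)²` of order `d` meets the second factor in the unique subgroup `⟨c⟩` of
order `d / c`, for some divisor `c` of `d`, so its projection to the first factor has order `c`
and is `⟨d / c⟩`. Hence `L` is spanned by `(d / c, f)` and `(0, c)`, the rows of a Hermite normal
form, and `f` is determined exactly modulo `c`. This gives `∑_{c ∣ d} c = σ₁(d)` subgroups, each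
with `d - 1` nonzero elements.
-/

open AddSubgroup

theorem AddSubgroup.card_eq_card_map_fst_mul_card_comap_inr {A B : Type*} [AddGroup A]
    [AddGroup B] (L : AddSubgroup (A × B)) :
    Nat.card L =
      Nat.card (L.map (AddMonoidHom.fst A B)) * Nat.card (L.comap (AddMonoidHom.inr A B)) := by
  let p : L →+ A := (AddMonoidHom.fst A B).comp L.subtype
  have hrange : p.range = L.map (AddMonoidHom.fst A B) := by
    rw [AddMonoidHom.range_comp, range_subtype]
  have hker : p.ker ≃ L.comap (AddMonoidHom.inr A B) :=
    { toFun x := ⟨x.1.1.2, by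
        have hx : x.1.1 = (0, x.1.1.2) := Prod.ext (x.2 : x.1.1.1 = 0) rfl
        exact hx ▸ x.1.2⟩
      invFun y := ⟨⟨(0, y.1), y.2⟩, rfl⟩
      left_inv x := Subtype.ext (Subtype.ext (Prod.ext (x.2 : x.1.1.1 = 0).symm rfl))
      right_inv y := rfl }
  rw [card_eq_card_quotient_mul_card_addSubgroup p.ker,
    Nat.card_congr (QuotientAddGroup.quotientKerEquivRange p).toEquiv, hrange, Nat.card_congr hker]

theorem IsAddCyclic.eq_of_card_eq {G : Type*} [AddCommGroup G] [IsAddCyclic G] [Finite G]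
    {H K : AddSubgroup G} (h : Nat.card H = Nat.card K) : H = K := by
  suffices ∀ H : AddSubgroup G, H = (nsmulAddMonoidHom (Nat.card H) : G →+ G).ker by
    rw [this H, this K, h]
  intro H
  refine eq_of_le_of_card_ge (fun x hx => ?_) ?_
  · have := congrArg Subtype.val (card_nsmul_eq_zero' (x := (⟨x, hx⟩ : H)))
    rwa [coe_nsmul, ZeroMemClass.coe_zero] at this
  · rw [IsAddCyclic.card_nsmulAddMonoidHom_ker, Nat.gcd_eq_right (card_addSubgroup_dvd_card H)]

theorem AddSubgroup.card_pointed_of_card_eq {G : Type*} [AddGroup G] [Finite G] (m : ℕ) :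
    Nat.card {p : AddSubgroup G × G // Nat.card p.1 = m ∧ p.2 ∈ p.1 ∧ p.2 ≠ 0} =
      (m - 1) * Nat.card {H : AddSubgroup G // Nat.card H = m} := by
  classical
  let e : {p : AddSubgroup G × G // Nat.card p.1 = m ∧ p.2 ∈ p.1 ∧ p.2 ≠ 0} ≃
      Σ H : {H : AddSubgroup G // Nat.card H = m}, {g : H.1 // g ≠ 0} :=
    { toFun p := ⟨⟨p.1.1, p.2.1⟩, ⟨p.1.2, p.2.2.1⟩, fun h => p.2.2.2 (congrArg Subtype.val h)⟩
      invFun q := ⟨(q.1.1, q.2.1), q.1.2, q.2.1.2, fun h => q.2.2 (Subtype.ext h)⟩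
      left_inv _ := rfl
      right_inv _ := rfl }
  have hfiber (H : {H : AddSubgroup G // Nat.card H = m}) :
      Nat.card {g : H.1 // g ≠ 0} = m - 1 := by
    have := Fintype.ofFinite H.1
    rw [Nat.card_eq_fintype_card, Fintype.card_subtype_compl, Fintype.card_subtype_eq,
      ← Nat.card_eq_fintype_card, H.2]
  have := Fintype.ofFinite {H : AddSubgroup G // Nat.card H = m}
  rw [Nat.card_congr e, Nat.card_sigma, Finset.sum_congr rfl fun H _ => hfiber H,
    Finset.sum_const, Finset.card_univ, ← Nat.card_eq_fintype_card, smul_eq_mul, mul_comm]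

namespace ZMod

variable {d : ℕ}

def hermiteSubgroup (e c : ℕ) (f : ZMod d) : AddSubgroup (ZMod d × ZMod d) :=
  (Submodule.span (ZMod d) {((e : ZMod d), f), (0, (c : ZMod d))}).toAddSubgroup

variable {c e : ℕ} {f f' : ZMod d} {L : AddSubgroup (ZMod d × ZMod d)}

theorem natCast_mul_natCast_eq_zero (hce : c * e = d) : (c : ZMod d) * e = 0 := by
  rw [← Nat.cast_mul, hce, natCast_self]

theorem mul_mem_zmultiples (k x : ZMod d) : k * x ∈ zmultiples x := by
  simpa [zsmul_eq_mul] using zsmul_mem (mem_zmultiples x) (k.cast : ℤ)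

theorem mem_hermiteSubgroup {x : ZMod d × ZMod d} :
    x ∈ hermiteSubgroup e c f ↔ ∃ k j : ZMod d, (k * e, k * f + j * c) = x := by
  simp [hermiteSubgroup, Submodule.mem_span_pair]

theorem hermiteSubgroup_le_iff :
    hermiteSubgroup e c f ≤ L ↔ ((e : ZMod d), f) ∈ L ∧ ((0 : ZMod d), (c : ZMod d)) ∈ L := by
  rw [hermiteSubgroup, ← toZModSubmodule_symm, OrderIso.symm_apply_le, Submodule.span_le,
    Set.insert_subset_iff, Set.singleton_subset_iff]
  rfl

theorem map_fst_hermiteSubgroup :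
    (hermiteSubgroup e c f).map (AddMonoidHom.fst _ _) = zmultiples (e : ZMod d) := by
  refine le_antisymm ?_ (zmultiples_le_of_mem ⟨_, (hermiteSubgroup_le_iff.mp le_rfl).1, rfl⟩)
  rintro _ ⟨_, hx, rfl⟩
  obtain ⟨k, j, rfl⟩ := mem_hermiteSubgroup.mp hx
  exact mul_mem_zmultiples k e

variable [NeZero d]

theorem card_zmultiples_natCast (hce : c * e = d) : Nat.card (zmultiples (c : ZMod d)) = e := by
  have hc : c ≠ 0 := by rintro rfl; exact NeZero.ne d (by omega)
  rw [Nat.card_zmultiples, addOrderOf_coe c (NeZero.ne d), Nat.gcd_eq_right ⟨e, hce.symm⟩, ← hce,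
    Nat.mul_div_cancel_left e (Nat.pos_of_ne_zero hc)]

theorem mul_natCast_eq_zero_iff (hce : c * e = d) (x : ZMod d) :
    x * e = 0 ↔ x ∈ zmultiples (c : ZMod d) := by
  suffices (nsmulAddMonoidHom e : ZMod d →+ ZMod d).ker = zmultiples (c : ZMod d) by
    rw [← this, AddMonoidHom.mem_ker, nsmulAddMonoidHom_apply, nsmul_eq_mul, mul_comm]
  refine IsAddCyclic.eq_of_card_eq ?_
  rw [IsAddCyclic.card_nsmulAddMonoidHom_ker, card_zmultiples_natCast hce, Nat.card_zmod,
    Nat.gcd_eq_right ⟨c, by rw [← hce, mul_comm]⟩]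

theorem card_quotient_zmultiples_natCast (hce : c * e = d) :
    Nat.card (ZMod d ⧸ zmultiples (c : ZMod d)) = c := by
  have h := card_eq_card_quotient_mul_card_addSubgroup (zmultiples (c : ZMod d))
  rw [Nat.card_zmod, card_zmultiples_natCast hce] at h
  have he : e ≠ 0 := by rintro rfl; exact NeZero.ne d (by omega)
  exact Nat.eq_of_mul_eq_mul_right (Nat.pos_of_ne_zero he) (h.symm.trans hce.symm)

theorem comap_inr_hermiteSubgroup (hce : c * e = d) :
    (hermiteSubgroup e c f).comap (AddMonoidHom.inr _ _) = zmultiples (c : ZMod d) := by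
  refine le_antisymm (fun y hy => ?_) (zmultiples_le_of_mem (hermiteSubgroup_le_iff.mp le_rfl).2)
  obtain ⟨k, j, hkj⟩ := mem_hermiteSubgroup.mp hy
  simp only [AddMonoidHom.inr_apply, Prod.mk.injEq] at hkj
  rw [← mul_natCast_eq_zero_iff hce, ← hkj.2]
  linear_combination f * hkj.1 + j * natCast_mul_natCast_eq_zero hce

theorem card_hermiteSubgroup (hce : c * e = d) : Nat.card (hermiteSubgroup e c f) = d := by
  rw [card_eq_card_map_fst_mul_card_comap_inr, map_fst_hermiteSubgroup,
    comap_inr_hermiteSubgroup hce, card_zmultiples_natCast (by rw [mul_comm, hce]),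
    card_zmultiples_natCast hce, hce]

theorem hermiteSubgroup_le_of_sub_mem (hce : c * e = d) (h : f - f' ∈ zmultiples (c : ZMod d)) :
    hermiteSubgroup e c f ≤ hermiteSubgroup e c f' := by
  rw [← comap_inr_hermiteSubgroup hce (f := f')] at h
  have hgen := hermiteSubgroup_le_iff.mp (le_refl (hermiteSubgroup e c f'))
  refine hermiteSubgroup_le_iff.mpr ⟨?_, hgen.2⟩
  simpa using add_mem hgen.1 h

theorem hermiteSubgroup_eq_iff (hce : c * e = d) :
    hermiteSubgroup e c f = hermiteSubgroup e c f' ↔ f - f' ∈ zmultiples (c : ZMod d) := by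
  refine ⟨fun h => ?_, fun h => le_antisymm (hermiteSubgroup_le_of_sub_mem hce h)
    (hermiteSubgroup_le_of_sub_mem hce (by simpa using neg_mem h))⟩
  obtain ⟨k, j, hkj⟩ := mem_hermiteSubgroup.mp (h ▸ (hermiteSubgroup_le_iff.mp le_rfl).1)
  simp only [Prod.mk.injEq] at hkj
  rw [← mul_natCast_eq_zero_iff hce, ← hkj.2]
  linear_combination f' * hkj.1 + j * natCast_mul_natCast_eq_zero hce

theorem exists_hermiteSubgroup_eq (hL : Nat.card L = d) :
    ∃ c ∈ d.divisors, ∃ f : ZMod d, hermiteSubgroup (d / c) c f = L := by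
  set N := L.comap (AddMonoidHom.inr _ _)
  obtain ⟨c, hc⟩ : Nat.card N ∣ d := by simpa using card_addSubgroup_dvd_card N
  have hce : c * Nat.card N = d := (mul_comm _ _).trans hc.symm
  have hN : N = zmultiples (c : ZMod d) :=
    IsAddCyclic.eq_of_card_eq (card_zmultiples_natCast hce).symm
  have hP : L.map (AddMonoidHom.fst _ _) = zmultiples (Nat.card N : ZMod d) := by
    refine IsAddCyclic.eq_of_card_eq ?_
    have hcard := hce.trans (hL.symm.trans (card_eq_card_map_fst_mul_card_comap_inr L))
    rw [card_zmultiples_natCast hc.symm]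
    exact Nat.eq_of_mul_eq_mul_right Nat.card_pos hcard.symm
  obtain ⟨⟨_, f⟩, hf, rfl⟩ : ((Nat.card N : ℕ) : ZMod d) ∈ L.map (AddMonoidHom.fst _ _) :=
    hP ▸ mem_zmultiples _
  have hc0 : 0 < c := Nat.pos_of_ne_zero fun h => NeZero.ne d (by rw [← hce, h, zero_mul])
  refine ⟨c, Nat.mem_divisors.mpr ⟨Dvd.intro _ hce, NeZero.ne d⟩, f, ?_⟩
  rw [Nat.div_eq_of_eq_mul_right hc0 hce.symm]
  refine eq_of_le_of_card_ge (hermiteSubgroup_le_iff.mpr ⟨hf, ?_⟩) ?_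
  · exact (hN ▸ mem_zmultiples _ : (c : ZMod d) ∈ N)
  · rw [hL, card_hermiteSubgroup hce]

theorem card_addSubgroups_prod_card_eq_sum_divisors :
    Nat.card {L : AddSubgroup (ZMod d × ZMod d) // Nat.card L = d} = ∑ c ∈ d.divisors, c := by
  have hce (c : d.divisors) : (c : ℕ) * (d / c) = d :=
    Nat.mul_div_cancel' (Nat.dvd_of_mem_divisors c.2)
  let F (x : Σ c : d.divisors, ZMod d ⧸ zmultiples ((c : ℕ) : ZMod d)) :
      {L : AddSubgroup (ZMod d × ZMod d) // Nat.card L = d} :=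
    ⟨hermiteSubgroup (d / x.1) x.1 x.2.out, card_hermiteSubgroup (hce x.1)⟩
  have hF : F.Bijective := by
    refine ⟨fun ⟨c, q⟩ ⟨c', q'⟩ h => ?_, fun ⟨L, hL⟩ => ?_⟩
    · have h : hermiteSubgroup (d / c) c q.out = hermiteSubgroup (d / c') c' q'.out :=
        congrArg Subtype.val h
      obtain rfl : c = c' := Subtype.ext <| by
        have := congrArg (fun L => Nat.card (L.map (AddMonoidHom.fst _ _))) h
        simpa only [map_fst_hermiteSubgroup, card_zmultiples_natCast
          ((mul_comm _ _).trans (hce _))] using this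
      rw [hermiteSubgroup_eq_iff (hce c), ← QuotientAddGroup.eq_iff_sub_mem,
        QuotientAddGroup.out_eq', QuotientAddGroup.out_eq'] at h
      rw [h]
    · obtain ⟨c, hc, f, rfl⟩ := exists_hermiteSubgroup_eq hL
      refine ⟨⟨⟨c, hc⟩, f⟩, Subtype.ext ?_⟩
      show hermiteSubgroup _ _ _ = _
      rw [hermiteSubgroup_eq_iff (hce ⟨c, hc⟩), ← QuotientAddGroup.eq_iff_sub_mem,
        QuotientAddGroup.out_eq']
  rw [← Nat.card_eq_of_bijective F hF, Nat.card_sigma,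
    Finset.sum_congr rfl fun c _ => card_quotient_zmultiples_natCast (hce c)]
  exact Finset.sum_coe_sort d.divisors id

end ZMod

/-- The number of pairs `(L, g)` where `L` is a subgroup of `(ℤ/d)²` of order `d` and
`g` is a nonzero element of `L` equals `(d-1)·σ₁(d)`. -/
theorem pointed_subgroup_count (d : ℕ) (hd : 0 < d) :
    Nat.card {p : AddSubgroup (ZMod d × ZMod d) × (ZMod d × ZMod d) //
        Nat.card p.1 = d ∧ p.2 ∈ p.1 ∧ p.2 ≠ 0} =
      (d - 1) * ∑ a ∈ d.divisors, a := by
  have : NeZero d := ⟨hd.ne'⟩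
  rw [AddSubgroup.card_pointed_of_card_eq, ZMod.card_addSubgroups_prod_card_eq_sum_divisors]
end

section
/- For every positive integer d, Σ_{d₁+d₂=d, d₁,d₂≥1} σ₁(d₁)σ₁(d₂) = (-d/2 + 1/12)·σ₁(d) + (5/12)·σ₃(d). -/
/-!
Liouville's elementary method. The left side is `∑ a c` over the quadruples `(a, b, c, e)` of
positive integers with `a b + c e = d`. The swap `(a, b) ↔ (c, e)` and the shear
`(a, b, c, e) ↦ (a + c, b, c, e - b)`, a bijection from the part with `b < e` onto the part with
`c < a`, relate the sums of `a c` and `a²` over the regions cut out by comparing `a` with `c` and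
`b` with `e`. Eliminating the off-diagonal sums expresses `∑ a c` through sums over the diagonals
`a = c` and `b = e`, and these are sums over the divisors of `d` of elementary power sums.
-/

/-- `σₖ(n) = ∑_{a ∣ n} aᵏ`, as a rational number. -/
def sigmaQ (k n : ℕ) : ℚ := ∑ a ∈ n.divisors, (a : ℚ) ^ k

open Finset

lemma sigmaQ_eq_sum_divisorsAntidiagonal (k n : ℕ) :
    sigmaQ k n = ∑ p ∈ n.divisorsAntidiagonal, (p.1 : ℚ) ^ k :=
  (Nat.sum_divisorsAntidiagonal fun a _ => (a : ℚ) ^ k).symm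

lemma Finset.sum_filter_lt_add_sum_filter_eq_add_sum_filter_gt {ι α M : Type*}
    [LinearOrder α] [AddCommMonoid M] (s : Finset ι) (g h : ι → α) (f : ι → M) :
    ∑ x ∈ s with g x < h x, f x + ∑ x ∈ s with g x = h x, f x +
      ∑ x ∈ s with h x < g x, f x = ∑ x ∈ s, f x := by
  rw [← sum_filter_add_sum_filter_not s (fun x => g x < h x), add_assoc,
    ← sum_filter_add_sum_filter_not (s.filter fun x => ¬ g x < h x) (fun x => g x = h x),
    filter_filter, filter_filter]
  congr 3 <;> ext x <;> simp only [mem_filter, not_lt] <;> grind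

lemma Finset.sum_Ioo_zero_eq_sum_range {M : Type*} [AddCommMonoid M] (f : ℕ → M)
    (hf : f 0 = 0) (m : ℕ) : ∑ a ∈ Ioo 0 m, f a = ∑ a ∈ range m, f a :=
  sum_subset (fun a ha => mem_range.2 (mem_Ioo.1 ha).2) fun a ha hnot => by
    obtain rfl : a = 0 := by simp only [mem_range, mem_Ioo] at ha hnot; omega
    exact hf

lemma Finset.sum_range_natCast {K : Type*} [Field K] [CharZero K] (m : ℕ) :
    ∑ a ∈ range m, (a : K) = ((m : K) ^ 2 - m) / 2 := by
  induction m with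
  | zero => simp
  | succ m ih => rw [sum_range_succ, ih]; push_cast; ring

lemma Finset.sum_range_natCast_sq {K : Type*} [Field K] [CharZero K] (m : ℕ) :
    ∑ a ∈ range m, (a : K) ^ 2 = (2 * (m : K) ^ 3 - 3 * m ^ 2 + m) / 6 := by
  induction m with
  | zero => simp
  | succ m ih => rw [sum_range_succ, ih]; push_cast; ring

namespace Besge

/-- `((a, b), (c, e))` encodes the representation `n = a b + c e`. -/
abbrev Quad : Type := (ℕ × ℕ) × (ℕ × ℕ)

def reps (n : ℕ) : Finset Quad :=
  {x ∈ (range (n + 1) ×ˢ range (n + 1)) ×ˢ (range (n + 1) ×ˢ range (n + 1)) |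
    x.1.1 * x.1.2 + x.2.1 * x.2.2 = n ∧ 0 < x.1.1 ∧ 0 < x.1.2 ∧ 0 < x.2.1 ∧ 0 < x.2.2}

lemma mem_reps {n a b c e : ℕ} :
    ((a, b), (c, e)) ∈ reps n ↔
      a * b + c * e = n ∧ 0 < a ∧ 0 < b ∧ 0 < c ∧ 0 < e := by
  simp only [reps, mem_filter, mem_product, mem_range]
  refine ⟨fun h => h.2, ?_⟩
  rintro ⟨rfl, ha, hb, hc, he⟩
  refine ⟨⟨⟨?_, ?_⟩, ?_, ?_⟩, rfl, ha, hb, hc, he⟩ <;> nlinarith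

variable {M : Type*} [AddCommMonoid M]

lemma sum_reps (n : ℕ) (f : Quad → M) :
    ∑ x ∈ reps n, f x =
      ∑ m ∈ Ioo 0 n,
        ∑ x ∈ m.divisorsAntidiagonal ×ˢ (n - m).divisorsAntidiagonal, f x := by
  rw [← sum_fiberwise_of_maps_to (g := fun x => x.1.1 * x.1.2) (t := Ioo 0 n)]
  · refine sum_congr rfl fun m hm => sum_congr ?_ fun _ _ => rfl
    ext ⟨⟨a, b⟩, c, e⟩
    simp only [mem_filter, mem_reps, mem_product, Nat.mem_divisorsAntidiagonal,
      mem_Ioo] at hm ⊢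
    constructor
    · rintro ⟨⟨rfl, ha, hb, hc, he⟩, rfl⟩
      refine ⟨⟨rfl, by positivity⟩, by omega, by omega⟩
    · rintro ⟨⟨rfl, hab⟩, hce, hn⟩
      simp only [mul_ne_zero_iff, ← Nat.pos_iff_ne_zero] at hab hn
      refine ⟨⟨by omega, hab.1, hab.2, ?_⟩, rfl⟩
      have : 0 < c * e := by omega
      exact ⟨Nat.pos_of_mul_pos_right this, Nat.pos_of_mul_pos_left this⟩
  · rintro ⟨⟨a, b⟩, c, e⟩ hx
    rw [mem_reps] at hx
    obtain ⟨rfl, ha, hb, hc, he⟩ := hx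
    simp only [mem_Ioo]
    constructor <;> nlinarith

lemma swap_mem_reps {n : ℕ} {x : Quad} : x.swap ∈ reps n ↔ x ∈ reps n := by
  obtain ⟨⟨a, b⟩, c, e⟩ := x
  simp only [Prod.swap_prod_mk, mem_reps]
  omega

lemma sum_filter_swap (n : ℕ) (p : Quad → Prop) [DecidablePred p] (f : Quad → M) :
    ∑ x ∈ reps n with p x.swap, f x.swap = ∑ x ∈ reps n with p x, f x :=
  sum_nbij' Prod.swap Prod.swap (by simp [swap_mem_reps]) (by simp [swap_mem_reps])
    (fun _ _ => rfl) (fun _ _ => rfl) (fun _ _ => rfl)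

def shear (x : Quad) : Quad := ((x.1.1 + x.2.1, x.1.2), (x.2.1, x.2.2 - x.1.2))

-- `a b + c e = (a + c) b + c (e - b)`
lemma sum_filter_shear (n : ℕ) (f : Quad → M) :
    ∑ x ∈ reps n with x.1.2 < x.2.2, f (shear x) =
      ∑ x ∈ reps n with x.2.1 < x.1.1, f x := by
  refine sum_nbij' shear (fun x => ((x.1.1 - x.2.1, x.1.2), (x.2.1, x.2.2 + x.1.2)))
    ?_ ?_ ?_ ?_ fun _ _ => rfl
  all_goals
    rintro ⟨⟨a, b⟩, c, e⟩ hx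
    simp only [mem_filter, mem_reps, shear] at hx ⊢
  · obtain ⟨⟨rfl, ha, hb, hc, he⟩, hbe⟩ := hx
    obtain ⟨k, rfl⟩ := Nat.exists_eq_add_of_lt hbe
    refine ⟨⟨?_, by omega, hb, hc, by omega⟩, by omega⟩
    rw [show b + k + 1 - b = k + 1 by omega]
    ring
  · obtain ⟨⟨rfl, ha, hb, hc, he⟩, hca⟩ := hx
    obtain ⟨k, rfl⟩ := Nat.exists_eq_add_of_lt hca
    refine ⟨⟨?_, by omega, hb, hc, by omega⟩, by omega⟩
    rw [show c + k + 1 - c = k + 1 by omega]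
    ring
  · simp only [Prod.mk.injEq, and_true, true_and]; omega
  · simp only [Prod.mk.injEq, and_true, true_and]; omega

lemma sum_filter_fst_eq (n : ℕ) (f : ℕ → M) :
    ∑ x ∈ reps n with x.1.1 = x.2.1, f x.1.1 =
      ∑ p ∈ n.divisorsAntidiagonal, (p.2 - 1) • f p.1 := by
  have hcount (p : ℕ × ℕ) : (p.2 - 1) • f p.1 = ∑ _b ∈ Ioo 0 p.2, f p.1 := by simp
  simp only [hcount]
  rw [sum_sigma']
  refine sum_nbij' (fun x => ⟨(x.1.1, x.1.2 + x.2.2), x.1.2⟩)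
    (fun y => ((y.1.1, y.2), (y.1.1, y.1.2 - y.2))) ?_ ?_ ?_ ?_ fun _ _ => rfl
  · rintro ⟨⟨a, b⟩, c, e⟩ hx
    simp only [mem_filter, mem_reps] at hx
    obtain ⟨⟨rfl, ha, hb, hc, he⟩, rfl⟩ := hx
    simp only [mem_sigma, Nat.mem_divisorsAntidiagonal, mem_Ioo]
    refine ⟨⟨by ring, by positivity⟩, hb, by omega⟩
  · rintro ⟨⟨a, q⟩, b⟩ hy
    simp only [mem_sigma, Nat.mem_divisorsAntidiagonal, mem_Ioo] at hy
    obtain ⟨⟨rfl, hn⟩, hb, hbq⟩ := hy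
    obtain ⟨k, rfl⟩ := Nat.exists_eq_add_of_lt hbq
    simp only [mem_filter, mem_reps]
    refine ⟨⟨?_, Nat.pos_of_ne_zero (left_ne_zero_of_mul hn), hb,
      Nat.pos_of_ne_zero (left_ne_zero_of_mul hn), by omega⟩, trivial⟩
    rw [show b + k + 1 - b = k + 1 by omega]
    ring
  · rintro ⟨⟨a, b⟩, c, e⟩ hx
    simp only [mem_filter, mem_reps] at hx
    simp only [Prod.mk.injEq, true_and]
    omega
  · rintro ⟨⟨a, q⟩, b⟩ hy
    simp only [mem_sigma, mem_Ioo] at hy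
    simp only [Sigma.mk.inj_iff, Prod.mk.injEq, heq_eq_eq, and_true, true_and]
    omega

lemma sum_filter_snd_eq (n : ℕ) (f : ℕ → ℕ → M) :
    ∑ x ∈ reps n with x.1.2 = x.2.2, f x.1.1 x.2.1 =
      ∑ p ∈ n.divisorsAntidiagonal, ∑ a ∈ Ioo 0 p.1, f a (p.1 - a) := by
  rw [sum_sigma']
  refine sum_nbij' (fun x => ⟨(x.1.1 + x.2.1, x.1.2), x.1.1⟩)
    (fun y => ((y.2, y.1.2), (y.1.1 - y.2, y.1.2))) ?_ ?_ ?_ ?_ ?_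
  · rintro ⟨⟨a, b⟩, c, e⟩ hx
    simp only [mem_filter, mem_reps] at hx
    obtain ⟨⟨rfl, ha, hb, hc, he⟩, rfl⟩ := hx
    simp only [mem_sigma, Nat.mem_divisorsAntidiagonal, mem_Ioo]
    refine ⟨⟨by ring, by positivity⟩, ha, by omega⟩
  · rintro ⟨⟨q, b⟩, a⟩ hy
    simp only [mem_sigma, Nat.mem_divisorsAntidiagonal, mem_Ioo] at hy
    obtain ⟨⟨rfl, hn⟩, ha, haq⟩ := hy
    obtain ⟨k, rfl⟩ := Nat.exists_eq_add_of_lt haq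
    simp only [mem_filter, mem_reps]
    refine ⟨⟨?_, ha, Nat.pos_of_ne_zero (right_ne_zero_of_mul hn), by omega,
      Nat.pos_of_ne_zero (right_ne_zero_of_mul hn)⟩, trivial⟩
    rw [show a + k + 1 - a = k + 1 by omega]
    ring
  · rintro ⟨⟨a, b⟩, c, e⟩ hx
    simp only [mem_filter, mem_reps] at hx
    simp only [Prod.mk.injEq, true_and]
    omega
  · rintro ⟨⟨q, b⟩, a⟩ hy
    simp only [mem_sigma, mem_Ioo] at hy
    simp only [Sigma.mk.inj_iff, Prod.mk.injEq, heq_eq_eq, and_true]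
    omega
  · intro x _
    simp only [add_tsub_cancel_left]

lemma sum_mul_eq_fst_diag (n : ℕ) :
    ∑ x ∈ reps n, (x.1.1 : ℚ) * x.2.1 =
      2 * ∑ x ∈ reps n with x.1.2 < x.2.2, (x.1.1 : ℚ) * x.2.1 +
        2 * ∑ x ∈ reps n with x.1.2 < x.2.2, (x.2.1 : ℚ) ^ 2 +
          ∑ x ∈ reps n with x.1.1 = x.2.1, (x.1.1 : ℚ) ^ 2 := by
  have hswap : ∑ x ∈ reps n with x.1.1 < x.2.1, (x.1.1 : ℚ) * x.2.1 =
      ∑ x ∈ reps n with x.2.1 < x.1.1, (x.1.1 : ℚ) * x.2.1 := by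
    rw [← sum_filter_swap]
    simp only [Prod.fst_swap, Prod.snd_swap, mul_comm]
  have hshear := sum_filter_shear n fun x => (x.1.1 : ℚ) * x.2.1
  have hdiag : ∑ x ∈ reps n with x.1.1 = x.2.1, (x.1.1 : ℚ) * x.2.1 =
      ∑ x ∈ reps n with x.1.1 = x.2.1, (x.1.1 : ℚ) ^ 2 :=
    sum_congr rfl fun x hx => by rw [(mem_filter.1 hx).2, sq]
  simp only [shear, Nat.cast_add, add_mul, sum_add_distrib, ← sq] at hshear
  rw [← sum_filter_lt_add_sum_filter_eq_add_sum_filter_gt (reps n) (fun x => x.1.1)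
    (fun x => x.2.1)]
  linear_combination hswap + hdiag - 2 * hshear

lemma sum_mul_eq_snd_diag (n : ℕ) :
    ∑ x ∈ reps n, (x.1.1 : ℚ) * x.2.1 =
      2 * ∑ x ∈ reps n with x.1.2 < x.2.2, (x.1.1 : ℚ) * x.2.1 +
        ∑ x ∈ reps n with x.1.2 = x.2.2, (x.1.1 : ℚ) * x.2.1 := by
  have hswap : ∑ x ∈ reps n with x.2.2 < x.1.2, (x.1.1 : ℚ) * x.2.1 =
      ∑ x ∈ reps n with x.1.2 < x.2.2, (x.1.1 : ℚ) * x.2.1 := by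
    rw [← sum_filter_swap]
    simp only [Prod.fst_swap, Prod.snd_swap, mul_comm]
  rw [← sum_filter_lt_add_sum_filter_eq_add_sum_filter_gt (reps n) (fun x => x.1.2)
    (fun x => x.2.2)]
  linear_combination hswap

lemma sum_sq_eq_fst_diag (n : ℕ) :
    ∑ x ∈ reps n, (x.1.1 : ℚ) ^ 2 =
      2 * ∑ x ∈ reps n with x.1.2 < x.2.2, (x.1.1 : ℚ) * x.2.1 +
        2 * ∑ x ∈ reps n with x.1.2 < x.2.2, (x.2.1 : ℚ) ^ 2 +
          ∑ x ∈ reps n with x.1.2 < x.2.2, (x.1.1 : ℚ) ^ 2 +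
            ∑ x ∈ reps n with x.1.1 = x.2.1, (x.1.1 : ℚ) ^ 2 := by
  have hswap : ∑ x ∈ reps n with x.1.1 < x.2.1, (x.1.1 : ℚ) ^ 2 =
      ∑ x ∈ reps n with x.2.1 < x.1.1, (x.2.1 : ℚ) ^ 2 := by
    rw [← sum_filter_swap]
    simp only [Prod.fst_swap, Prod.snd_swap]
  have hshear_sq := sum_filter_shear n fun x => (x.2.1 : ℚ) ^ 2
  have hshear := sum_filter_shear n fun x => (x.1.1 : ℚ) ^ 2
  simp only [shear] at hshear_sq
  simp only [shear, Nat.cast_add, add_sq, mul_assoc, sum_add_distrib, ← mul_sum] at hshear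
  rw [← sum_filter_lt_add_sum_filter_eq_add_sum_filter_gt (reps n) (fun x => x.1.1)
    (fun x => x.2.1)]
  linear_combination hswap - hshear_sq - hshear

lemma sum_sq_eq_snd_diag (n : ℕ) :
    ∑ x ∈ reps n, (x.1.1 : ℚ) ^ 2 =
      ∑ x ∈ reps n with x.1.2 < x.2.2, (x.2.1 : ℚ) ^ 2 +
        ∑ x ∈ reps n with x.1.2 < x.2.2, (x.1.1 : ℚ) ^ 2 +
          ∑ x ∈ reps n with x.1.2 = x.2.2, (x.1.1 : ℚ) ^ 2 := by
  have hswap : ∑ x ∈ reps n with x.2.2 < x.1.2, (x.1.1 : ℚ) ^ 2 =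
      ∑ x ∈ reps n with x.1.2 < x.2.2, (x.2.1 : ℚ) ^ 2 := by
    rw [← sum_filter_swap]
    simp only [Prod.fst_swap, Prod.snd_swap]
  rw [← sum_filter_lt_add_sum_filter_eq_add_sum_filter_gt (reps n) (fun x => x.1.2)
    (fun x => x.2.2)]
  linear_combination hswap

lemma sum_mul_eq_diagonals (n : ℕ) :
    ∑ x ∈ reps n, (x.1.1 : ℚ) * x.2.1 =
      ∑ x ∈ reps n with x.1.2 = x.2.2, (x.1.1 : ℚ) ^ 2 +
        (∑ x ∈ reps n with x.1.2 = x.2.2, (x.1.1 : ℚ) * x.2.1 -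
          ∑ x ∈ reps n with x.1.1 = x.2.1, (x.1.1 : ℚ) ^ 2) / 2 := by
  linarith [sum_mul_eq_fst_diag n, sum_mul_eq_snd_diag n, sum_sq_eq_fst_diag n,
    sum_sq_eq_snd_diag n]

lemma sum_filter_fst_eq_sq (n : ℕ) :
    ∑ x ∈ reps n with x.1.1 = x.2.1, (x.1.1 : ℚ) ^ 2 =
      ∑ p ∈ n.divisorsAntidiagonal, ((p.2 : ℚ) - 1) * (p.1 : ℚ) ^ 2 := by
  rw [sum_filter_fst_eq n fun a => (a : ℚ) ^ 2]
  refine sum_congr rfl fun p hp => ?_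
  have hq : 1 ≤ p.2 := Nat.one_le_iff_ne_zero.2 (Nat.right_ne_zero_of_mem_divisorsAntidiagonal hp)
  rw [nsmul_eq_mul, Nat.cast_sub hq, Nat.cast_one]

lemma sum_filter_snd_eq_sq (n : ℕ) :
    ∑ x ∈ reps n with x.1.2 = x.2.2, (x.1.1 : ℚ) ^ 2 =
      ∑ p ∈ n.divisorsAntidiagonal, (2 * (p.1 : ℚ) ^ 3 - 3 * (p.1 : ℚ) ^ 2 + p.1) / 6 := by
  rw [sum_filter_snd_eq n fun a _ => (a : ℚ) ^ 2]
  refine sum_congr rfl fun p _ => ?_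
  rw [sum_Ioo_zero_eq_sum_range _ (by simp), sum_range_natCast_sq]

lemma sum_filter_snd_eq_mul (n : ℕ) :
    ∑ x ∈ reps n with x.1.2 = x.2.2, (x.1.1 : ℚ) * x.2.1 =
      ∑ p ∈ n.divisorsAntidiagonal, ((p.1 : ℚ) ^ 3 - p.1) / 6 := by
  rw [sum_filter_snd_eq n fun a c => (a : ℚ) * c]
  refine sum_congr rfl fun p _ => ?_
  have hsub : ∀ a ∈ range p.1, (a : ℚ) * (p.1 - a : ℕ) = p.1 * a - a ^ 2 := fun a ha => by
    rw [Nat.cast_sub (mem_range.1 ha).le]; ring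
  rw [sum_Ioo_zero_eq_sum_range _ (by simp), sum_congr rfl hsub, sum_sub_distrib, ← mul_sum,
    sum_range_natCast, sum_range_natCast_sq]
  ring

lemma sum_reps_mul (n : ℕ) :
    ∑ x ∈ reps n, (x.1.1 : ℚ) * x.2.1 =
      ∑ p ∈ n.divisorsAntidiagonal,
        ((-(n : ℚ) / 2 + 1 / 12) * p.1 + 5 / 12 * (p.1 : ℚ) ^ 3) := by
  rw [sum_mul_eq_diagonals, sum_filter_snd_eq_sq, sum_filter_snd_eq_mul, sum_filter_fst_eq_sq,
    ← sum_sub_distrib, sum_div, ← sum_add_distrib]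
  refine sum_congr rfl fun p hp => ?_
  have hpq : (p.1 : ℚ) * p.2 = n := by exact_mod_cast (Nat.mem_divisorsAntidiagonal.1 hp).1
  linear_combination (-(p.1 : ℚ) / 2) * hpq

lemma sum_sigmaQ_mul_sigmaQ (n : ℕ) :
    ∑ m ∈ Ioo 0 n, sigmaQ 1 m * sigmaQ 1 (n - m) = ∑ x ∈ reps n, (x.1.1 : ℚ) * x.2.1 := by
  simp only [sum_reps, sigmaQ_eq_sum_divisorsAntidiagonal, pow_one, sum_mul_sum, sum_product]

end Besge

theorem convolution_sigma1_general (d : ℕ) :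
    ∑ d₁ ∈ Finset.Ioo 0 d, sigmaQ 1 d₁ * sigmaQ 1 (d - d₁) =
      (-(d : ℚ) / 2 + 1 / 12) * sigmaQ 1 d + (5 / 12) * sigmaQ 3 d := by
  rw [Besge.sum_sigmaQ_mul_sigmaQ, Besge.sum_reps_mul, sigmaQ_eq_sum_divisorsAntidiagonal,
    sigmaQ_eq_sum_divisorsAntidiagonal, mul_sum, mul_sum, ← sum_add_distrib]
  simp only [pow_one]

/-- `∑_{d₁+d₂=d, d₁,d₂≥1} σ₁(d₁)σ₁(d₂) = (-d/2 + 1/12)·σ₁(d) + (5/12)·σ₃(d)`. -/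
theorem convolution_sigma1 (d : ℕ) (hd : 0 < d) :
    ∑ d₁ ∈ Finset.Ioo 0 d, sigmaQ 1 d₁ * sigmaQ 1 (d - d₁) =
      (-(d : ℚ) / 2 + 1 / 12) * sigmaQ 1 d + (5 / 12) * sigmaQ 3 d :=
  convolution_sigma1_general d
end

section
/- Let α = (1 2 ⋯ d) ∈ S_d be a d-cycle and let β = (1 j k) be a 3-cycle with j, k ∈ {2,…,d} distinct. Then the product βα is a d-cycle if and only if j < k. -/
/-!
On `Fin (n + 1)` the product `σ = [0, j, k].formPerm * finRotate (n + 1)` sends `x` to `x + 1`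
except that `n ↦ j`, `j - 1 ↦ k` and `k - 1 ↦ 0`. If `j < k`, the orbit of `0` is
`0, …, j - 1, k, …, n, j, …, k - 1`, i.e. everything. If `k < j`, the set `{x | x < k}` is
`σ`-invariant, so `0` and `j` lie in different cycles of `σ`.
-/

open Equiv Equiv.Perm

theorem List.formPerm_triple_apply {α : Type*} [DecidableEq α] {a b c : α} (hab : a ≠ b)
    (hac : a ≠ c) (hbc : b ≠ c) (x : α) :
    [a, b, c].formPerm x = if x = a then b else if x = b then c else if x = c then a else x := by
  simp only [formPerm_cons_cons, formPerm_singleton, mul_one, Perm.mul_apply, swap_apply_def]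
  split_ifs <;> simp_all

theorem Equiv.Perm.SameCycle.mem_of_mapsTo {α : Type*} [Finite α] {σ : Perm α} {s : Set α}
    {x y : α} (hxy : σ.SameCycle x y) (hs : Set.MapsTo σ s s) (hx : x ∈ s) : y ∈ s := by
  obtain ⟨m, -, rfl⟩ := hxy.exists_pow_eq'
  rw [coe_pow]
  exact hs.iterate m hx

theorem Equiv.Perm.card_support_eq_card_iff {α : Type*} [Fintype α] [DecidableEq α]
    {σ : Perm α} : σ.support.card = Fintype.card α ↔ ∀ x, σ x ≠ x := by
  simp only [Finset.card_eq_iff_eq_univ, Finset.eq_univ_iff_forall, mem_support]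

theorem Equiv.Perm.isCycle_of_forall_exists_pow_eq {α : Type*} {σ : Perm α} {a : α}
    (ha : σ a ≠ a) (h : ∀ y, ∃ m : ℕ, (σ ^ m) a = y) : σ.IsCycle :=
  ⟨a, ha, fun y _ ↦ let ⟨m, hm⟩ := h y; ⟨m, by rwa [zpow_natCast]⟩⟩

section

variable {n : ℕ} {j k : Fin (n + 1)}

theorem val_formPerm_mul_finRotate (hj : j ≠ 0) (hk : k ≠ 0) (hjk : j ≠ k) (x : Fin (n + 1)) :
    (([0, j, k].formPerm * finRotate (n + 1)) x : ℕ) =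
      if (x : ℕ) = n then (j : ℕ) else if (x : ℕ) + 1 = j then (k : ℕ)
      else if (x : ℕ) + 1 = k then 0 else (x : ℕ) + 1 := by
  have hx := x.isLt
  rw [Perm.mul_apply, List.formPerm_triple_apply hj.symm hk.symm hjk]
  simp only [Fin.ext_iff, apply_ite Fin.val, coe_finRotate, Fin.val_last,
    Fin.coe_ofNat_eq_mod, Nat.zero_mod]
  have := Fin.val_ne_iff.mpr hjk
  have := Fin.val_ne_zero_iff.mpr hj
  have := Fin.val_ne_zero_iff.mpr hk
  split_ifs <;> first | omega | contradiction

theorem formPerm_mul_finRotate_mapsTo_Iio (hj : j ≠ 0) (hk : k ≠ 0) (hkj : k < j) :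
    Set.MapsTo ([0, j, k].formPerm * finRotate (n + 1)) (Set.Iio k) (Set.Iio k) := by
  intro x hx
  simp only [Set.mem_Iio, Fin.lt_def, val_formPerm_mul_finRotate hj hk hkj.ne'] at hx ⊢
  have := j.isLt
  rw [Fin.lt_def] at hkj
  split_ifs <;> omega

theorem formPerm_mul_finRotate_apply_ne (hj : j ≠ 0) (hk : k ≠ 0) (hjk : j < k)
    (x : Fin (n + 1)) : ([0, j, k].formPerm * finRotate (n + 1)) x ≠ x := by
  rw [Ne, Fin.ext_iff, val_formPerm_mul_finRotate hj hk hjk.ne]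
  have := k.isLt
  have := Fin.val_ne_zero_iff.mpr hj
  rw [Fin.lt_def] at hjk
  split_ifs <;> omega

theorem val_pow_formPerm_mul_finRotate_apply_zero (hj : j ≠ 0) (hk : k ≠ 0) (hjk : j < k)
    {m : ℕ} (hm : m ≤ n) :
    ((([0, j, k].formPerm * finRotate (n + 1)) ^ m) 0 : ℕ) =
      if m < j then m else if m < j + (n + 1) - k then m + k - j else m + k - (n + 1) := by
  have := Fin.val_ne_zero_iff.mpr hj
  rw [Fin.lt_def] at hjk
  induction m with
  | zero =>
    simp only [pow_zero, Perm.one_apply, Fin.coe_ofNat_eq_mod, Nat.zero_mod]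
    split_ifs <;> omega
  | succ m ih =>
    rw [pow_succ', Perm.mul_apply, val_formPerm_mul_finRotate hj hk (Fin.ne_of_lt hjk),
      ih (by omega)]
    split_ifs <;> omega

theorem formPerm_mul_finRotate_isCycle (hj : j ≠ 0) (hk : k ≠ 0) (hjk : j < k) :
    ([0, j, k].formPerm * finRotate (n + 1)).IsCycle := by
  refine isCycle_of_forall_exists_pow_eq (formPerm_mul_finRotate_apply_ne hj hk hjk 0) fun y ↦ ?_
  have := y.isLt
  have := k.isLt
  rw [Fin.lt_def] at hjk
  have orbit := fun m hm ↦ val_pow_formPerm_mul_finRotate_apply_zero hj hk hjk (m := m) hm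
  by_cases hyj : (y : ℕ) < j
  · exact ⟨y, Fin.ext (by rw [orbit _ (by omega)]; split_ifs; omega)⟩
  by_cases hyk : (y : ℕ) < k
  · exact ⟨(y : ℕ) + (n + 1) - k, Fin.ext (by rw [orbit _ (by omega)]; split_ifs <;> omega)⟩
  · exact ⟨(y : ℕ) + j - k, Fin.ext (by rw [orbit _ (by omega)]; split_ifs <;> omega)⟩

end

/-- With `α = (1 2 ⋯ d)` the standard `d`-cycle (here on `Fin d`, sending `i ↦ i+1`) and
`β = (1 j k)` a 3-cycle (here the cycle `0 ↦ j ↦ k ↦ 0`) with `j, k ≠ 0` distinct, the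
product `βα` is a `d`-cycle if and only if `j < k`. -/
theorem threeCycle_mul_cycle_isCycle_iff (d : ℕ) (hd : 3 ≤ d) (j k : Fin d)
    (hj : j ≠ ⟨0, by omega⟩) (hk : k ≠ ⟨0, by omega⟩) (hjk : j ≠ k) :
    ((([(⟨0, by omega⟩ : Fin d), j, k].formPerm * finRotate d).IsCycle ∧
      ([(⟨0, by omega⟩ : Fin d), j, k].formPerm * finRotate d).support.card = d)) ↔
      j < k := by
  obtain ⟨n, rfl⟩ : ∃ n, d = n + 1 := ⟨d - 1, by omega⟩
  change j ≠ 0 at hj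
  change k ≠ 0 at hk
  constructor
  · rintro ⟨hcycle, hcard⟩
    refine (Ne.lt_or_gt hjk).resolve_right fun hkj ↦ ?_
    have hmoved := card_support_eq_card_iff.mp (hcard.trans (Fintype.card_fin _).symm)
    have hj_mem := (hcycle.sameCycle (hmoved 0) (hmoved j)).mem_of_mapsTo
      (formPerm_mul_finRotate_mapsTo_Iio hj hk hkj) ((Fin.pos_iff_ne_zero' k).mpr hk)
    exact lt_asymm hkj hj_mem
  · intro hjk'
    refine ⟨formPerm_mul_finRotate_isCycle hj hk hjk', ?_⟩
    exact (card_support_eq_card_iff.mpr (formPerm_mul_finRotate_apply_ne hj hk hjk')).trans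
      (Fintype.card_fin _)
end

section
/- Let a, b be positive integers with a + b = d, and let α ∈ S_d be the permutation (1 2 ⋯ a)(a+1 ⋯ d) with two cycles of lengths a and b. If a ≠ b, then there exists exactly one 3-cycle β (up to simultaneous conjugation by the centralizer of α) acting nontrivially on both orbits of α such that βα has cycle type (a,b); if a = b, then no such 3-cycle exists. -/
/-!
Write `α` for the product of the two rotations and identify `Fin a ⊕ Fin b` with `Fin (a + b)`,
so that the orbits are `[0, a)` and `[a, a + b)`. A 3-cycle meeting both orbits has two points in
one of them; up to exchanging the summands it is `β = (u v w)` with `u, v < a ≤ w`. Translating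
each orbit (which commutes with `α`) conjugates `β` to `(t 0 a)` with `t = u - v mod a`. The
transposition `(0 a)` joins the two cycles of `α` into the `(a + b)`-cycle `ρ`, so
`(t 0 a) α = (t 0) ρ`, and `(t 0)` splits `ρ` into cycles of lengths `t` and `a + b - t`. Hence
`β α` has cycle type `(a, b)` iff `a + b - t ∈ {a, b}`, i.e. `t = b`, which forces `b < a`; and
then every such `β` is conjugate to `(b 0 a)` under the centralizer of `α`.
-/

open Equiv Equiv.Perm

/-- `β` is a 3-cycle acting nontrivially on both orbits `Fin a` and `Fin b` of the
permutation `α = (1⋯a)(a+1⋯d)` (realized as `sumCongr (finRotate a) (finRotate b)` on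
`Fin a ⊕ Fin b`) such that `βα` has cycle type `(a,b)`, i.e. is conjugate to `α`. -/
def GoodThreeCycle (a b : ℕ) (β : Perm (Fin a ⊕ Fin b)) : Prop :=
  β.IsThreeCycle ∧
  (∃ x : Fin a, β (Sum.inl x) ≠ Sum.inl x) ∧
  (∃ y : Fin b, β (Sum.inr y) ≠ Sum.inr y) ∧
  IsConj (Equiv.sumCongr (finRotate a) (finRotate b))
    (β * Equiv.sumCongr (finRotate a) (finRotate b))

theorem Equiv.permCongr_swap {α β : Type*} [DecidableEq α] [DecidableEq β] (e : α ≃ β)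
    (x y : α) : e.permCongr (swap x y) = swap (e x) (e y) :=
  symm_trans_swap_trans x y e

theorem finRotate_eq_addRight_one {n : ℕ} [NeZero n] : finRotate n = Equiv.addRight 1 := by
  ext i : 1
  exact finRotate_apply i

theorem val_finRotate {n : ℕ} (i : Fin n) :
    (finRotate n i : ℕ) = if (i : ℕ) + 1 = n then 0 else (i : ℕ) + 1 := by
  obtain ⟨m, rfl⟩ := Nat.exists_eq_add_one_of_ne_zero i.pos.ne'
  rw [coe_finRotate]
  simp only [Fin.ext_iff, Fin.val_last, Nat.add_right_cancel_iff]

theorem finSumFinEquiv_permCongr_sumCongr_finRotate {n m : ℕ} (hm : 0 < m) :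
    finSumFinEquiv.permCongr (Equiv.sumCongr (finRotate n) (finRotate m)) =
      swap ⟨0, by omega⟩ ⟨n, by omega⟩ * finRotate (n + m) := by
  ext x : 1
  obtain ⟨x | x, rfl⟩ := finSumFinEquiv.surjective x <;>
    simp only [permCongr_apply, finSumFinEquiv_apply_left, finSumFinEquiv_apply_right,
      finSumFinEquiv_symm_apply_castAdd, finSumFinEquiv_symm_apply_natAdd, Equiv.sumCongr_apply,
      Sum.map_inl, Sum.map_inr, Perm.mul_apply, swap_apply_def] <;>
    split_ifs <;>
    simp only [Fin.ext_iff, val_finRotate, Fin.val_castAdd, Fin.val_natAdd] at * <;>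
    split_ifs at * <;> omega

namespace Equiv.Perm

variable {α β : Type*} [Fintype α] [DecidableEq α] [Fintype β] [DecidableEq β]

theorem cycleType_permCongr (e : α ≃ β) (g : Perm α) :
    (e.permCongr g).cycleType = g.cycleType := by
  have h : e.permCongr g = g.extendDomain (e.trans (subtypeUnivEquiv fun _ ↦ trivial).symm) := by
    ext x
    rw [permCongr_apply, extendDomain_apply_subtype _ _ trivial]
    rfl
  rw [h, cycleType_extendDomain]

theorem cycleType_sumCongr (f : Perm α) (g : Perm β) :
    (sumCongr f g).cycleType = f.cycleType + g.cycleType := by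
  have hf : sumCongr f (1 : Perm β) = f.extendDomain sumIsLeft.symm := by
    ext (x | x) <;> rfl
  have hg : sumCongr (1 : Perm α) g = g.extendDomain sumIsRight.symm := by
    ext (x | x) <;> rfl
  have hdisj : Disjoint (sumCongr f (1 : Perm β)) (sumCongr 1 g) := by
    rintro (x | x)
    · exact .inr rfl
    · exact .inl rfl
  rw [← mul_one f, ← one_mul g, ← sumCongr_mul, hdisj.cycleType_mul, hf, hg,
    cycleType_extendDomain, cycleType_extendDomain, mul_one, one_mul]

theorem eq_of_mem_cycleType_finRotate {n k : ℕ} (hk : k ∈ (finRotate n).cycleType) : k = n := by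
  rcases lt_or_ge n 2 with hn | hn
  · interval_cases n <;> simp [finRotate_one, ← one_def] at hk
  · simpa [cycleType_finRotate_of_le hn] using hk

theorem cycleType_swap_mul_finRotate {n N : ℕ} (hn : n < N) :
    (swap (⟨0, by omega⟩ : Fin N) ⟨n, hn⟩ * finRotate N).cycleType =
      (finRotate n).cycleType + (finRotate (N - n)).cycleType := by
  obtain ⟨m, rfl⟩ : ∃ m, N = n + m := ⟨N - n, by omega⟩
  rw [← finSumFinEquiv_permCongr_sumCongr_finRotate (by omega), cycleType_permCongr,
    cycleType_sumCongr, Nat.add_sub_cancel_left]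

end Equiv.Perm

section MixedThreeCycle

open Sum

variable {a b : ℕ}

/-- The 3-cycle `inl u ↦ inl v ↦ inr w ↦ inl u`. -/
def mixedThreeCycle (u v : Fin a) (w : Fin b) : Perm (Fin a ⊕ Fin b) :=
  swap (inl u) (inl v) * swap (inl v) (inr w)

theorem isThreeCycle_mixedThreeCycle {u v : Fin a} (huv : u ≠ v) (w : Fin b) :
    (mixedThreeCycle u v w).IsThreeCycle := by
  rw [mixedThreeCycle, swap_comm]
  exact isThreeCycle_swap_mul_swap_same (by simpa using huv.symm) (by simp) (by simp)

theorem permCongrHom_sumComm_mixedThreeCycle (u v : Fin b) (w : Fin a) :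
    (sumComm (Fin b) (Fin a)).permCongrHom (mixedThreeCycle u v w) =
      swap (inr u) (inr v) * swap (inr v) (inl w) := by
  simp [mixedThreeCycle, permCongrHom_coe, permCongr_swap]

variable [NeZero a] [NeZero b]

theorem cycleType_mixedThreeCycle_zero_mul (t : Fin a) :
    (mixedThreeCycle t 0 0 * Equiv.sumCongr (finRotate a) (finRotate b)).cycleType =
      (finRotate t).cycleType + (finRotate (a + b - t)).cycleType := by
  have hb : 0 < b := NeZero.pos b
  have hinl_t : finSumFinEquiv (inl t : Fin a ⊕ Fin b) = ⟨t, by omega⟩ := rfl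
  have hinl_zero : finSumFinEquiv (inl 0 : Fin a ⊕ Fin b) = ⟨0, by omega⟩ := Fin.ext (by simp)
  have hinr_zero : finSumFinEquiv (inr 0 : Fin a ⊕ Fin b) = ⟨a, by omega⟩ := Fin.ext (by simp)
  rw [← cycleType_permCongr finSumFinEquiv, ← permCongrHom_coe, map_mul, mixedThreeCycle, map_mul,
    permCongrHom_coe, finSumFinEquiv_permCongr_sumCongr_finRotate hb, permCongr_swap,
    permCongr_swap, hinl_t, hinl_zero, hinr_zero, mul_assoc, swap_mul_self_mul, swap_comm,
    cycleType_swap_mul_finRotate]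

theorem isConj_mixedThreeCycle_zero_mul_iff (t : Fin a) :
    IsConj (Equiv.sumCongr (finRotate a) (finRotate b))
        (mixedThreeCycle t 0 0 * Equiv.sumCongr (finRotate a) (finRotate b)) ↔ (t : ℕ) = b := by
  have ht := t.isLt
  have hb : 0 < b := NeZero.pos b
  rw [isConj_iff_cycleType_eq, cycleType_mixedThreeCycle_zero_mul, cycleType_sumCongr]
  constructor
  · intro h
    have hmem : a + b - t ∈ (finRotate a).cycleType + (finRotate b).cycleType := by
      rw [h, cycleType_finRotate_of_le (n := a + b - t) (by omega)]
      exact Multiset.mem_add.2 (.inr (Multiset.mem_singleton_self _))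
    rcases Multiset.mem_add.1 hmem with h' | h' <;> have := eq_of_mem_cycleType_finRotate h' <;>
      omega
  · intro h
    rw [h, Nat.add_sub_cancel, add_comm]

theorem commute_sumCongr_addRight_finRotate (v : Fin a) (w : Fin b) :
    Commute (Equiv.sumCongr (Equiv.addRight v) (Equiv.addRight w))
      (Equiv.sumCongr (finRotate a) (finRotate b)) := by
  rw [finRotate_eq_addRight_one, finRotate_eq_addRight_one]
  ext (x | x) <;> simp <;> ac_rfl

theorem mixedThreeCycle_eq_conj (u v : Fin a) (w : Fin b) :
    mixedThreeCycle u v w =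
      Equiv.sumCongr (Equiv.addRight v) (Equiv.addRight w) * mixedThreeCycle (u - v) 0 0 *
        (Equiv.sumCongr (Equiv.addRight v) (Equiv.addRight w))⁻¹ := by
  set σ : Perm (Fin a ⊕ Fin b) := Equiv.sumCongr (Equiv.addRight v) (Equiv.addRight w)
  have hσ : σ * mixedThreeCycle (u - v) 0 0 * σ⁻¹ =
      (σ * swap (inl (u - v)) (inl 0) * σ⁻¹) * (σ * swap (inl 0) (inr 0) * σ⁻¹) := by
    simp only [mixedThreeCycle]
    group
  rw [hσ, ← swap_apply_apply, ← swap_apply_apply]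
  simp [σ, mixedThreeCycle]

theorem isConj_mixedThreeCycle_mul_iff (u v : Fin a) (w : Fin b) :
    IsConj (Equiv.sumCongr (finRotate a) (finRotate b))
        (mixedThreeCycle u v w * Equiv.sumCongr (finRotate a) (finRotate b)) ↔
      ((u - v : Fin a) : ℕ) = b := by
  have hcomm := (commute_sumCongr_addRight_finRotate v w).inv_left
  rw [← isConj_mixedThreeCycle_zero_mul_iff, isConj_iff_cycleType_eq, isConj_iff_cycleType_eq,
    mixedThreeCycle_eq_conj, mul_assoc _ _ (Equiv.sumCongr (finRotate a) (finRotate b)), hcomm.eq,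
    ← mul_assoc, mul_assoc _ (mixedThreeCycle _ _ _), cycleType_conj]

end MixedThreeCycle

section Classification

open Sum

variable {a b : ℕ}

theorem permCongr_sumComm_sumCongr (f : Perm (Fin a)) (g : Perm (Fin b)) :
    (sumComm (Fin b) (Fin a)).permCongr (Equiv.sumCongr g f) = Equiv.sumCongr f g := by
  ext (x | x) <;> rfl

theorem goodThreeCycle_permCongrHom_sumComm_iff (γ : Perm (Fin b ⊕ Fin a)) :
    GoodThreeCycle a b ((sumComm (Fin b) (Fin a)).permCongrHom γ) ↔ GoodThreeCycle b a γ := by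
  have hcycleType (g : Perm (Fin b ⊕ Fin a)) :
      ((sumComm (Fin b) (Fin a)).permCongrHom g).cycleType = g.cycleType := by
    rw [permCongrHom_coe, cycleType_permCongr]
  have hswap (z : Fin b ⊕ Fin a) (z' : Fin a ⊕ Fin b) : z.swap = z' ↔ z = z'.swap := by
    constructor <;> rintro rfl <;> simp
  rw [GoodThreeCycle, GoodThreeCycle, ← permCongr_sumComm_sumCongr, ← permCongrHom_coe,
    ← map_mul, IsThreeCycle, IsThreeCycle, isConj_iff_cycleType_eq, isConj_iff_cycleType_eq,
    hcycleType, hcycleType, hcycleType]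
  simp only [permCongrHom_coe, permCongr_apply, sumComm_symm, sumComm_apply, ne_eq, hswap,
    Sum.swap_inl, Sum.swap_inr]
  tauto

theorem Equiv.Perm.IsThreeCycle.eq_mixedThreeCycle_or_eq_permCongrHom_sumComm
    {β : Perm (Fin a ⊕ Fin b)} (h3 : β.IsThreeCycle) {x : Fin a} {y : Fin b}
    (hx : β (inl x) ≠ inl x) (hy : β (inr y) ≠ inr y) :
    (∃ u v w, β = mixedThreeCycle u v w) ∨
      ∃ u v w, β = (sumComm (Fin b) (Fin a)).permCongrHom (mixedThreeCycle u v w) := by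
  have hcube : β (β (β (inr y))) = inr y := by
    have h : β ^ 3 = 1 := h3.orderOf ▸ pow_orderOf_eq_one β
    simpa [pow_succ] using congrArg (· (inr y)) h
  have hsupp := h3.support_eq_iff_mem_support.2 (mem_support.2 hy)
  have hx' : inl x ∈ β.support := mem_support.2 hx
  -- Start the cycle at the first of its two consecutive points lying in the same orbit.
  have hdecomp (c) (hc : c ∈ β.support) : β = swap c (β c) * swap (β c) (β (β c)) :=
    h3.eq_swap_mul_swap_iff_mem_support.2 hc
  simp only [hsupp, Finset.mem_insert, Finset.mem_singleton] at hdecomp hx'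
  generalize hP : β (inr y) = P at *
  generalize hQ : β P = Q at *
  rcases P with p | p <;> rcases Q with q | q
  · left
    exact ⟨p, q, y, by rw [hdecomp _ (.inr (.inl rfl)), hQ, hcube]; rfl⟩
  · right
    refine ⟨q, y, p, ?_⟩
    rw [hdecomp _ (.inr (.inr rfl)), hcube, hP, permCongrHom_sumComm_mixedThreeCycle]
  · right
    refine ⟨y, p, q, ?_⟩
    rw [hdecomp _ (.inl rfl), hP, hQ, permCongrHom_sumComm_mixedThreeCycle]
  · simp at hx'

theorem GoodThreeCycle.exists_eq_mixedThreeCycle {β : Perm (Fin a ⊕ Fin b)}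
    (h : GoodThreeCycle a b β) :
    (∃ u v w, β = mixedThreeCycle u v w ∧ ((u - v : Fin a) : ℕ) = b) ∨
      ∃ u v w, β = (sumComm (Fin b) (Fin a)).permCongrHom (mixedThreeCycle u v w) ∧
        ((u - v : Fin b) : ℕ) = a := by
  obtain ⟨h3, ⟨x, hx⟩, ⟨y, hy⟩, hconj⟩ := h
  have : NeZero a := NeZero.of_pos x.pos
  have : NeZero b := NeZero.of_pos y.pos
  rcases IsThreeCycle.eq_mixedThreeCycle_or_eq_permCongrHom_sumComm h3 hx hy with
    ⟨u, v, w, rfl⟩ | ⟨u, v, w, rfl⟩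
  · exact .inl ⟨u, v, w, rfl, (isConj_mixedThreeCycle_mul_iff u v w).1 hconj⟩
  · have hgood := (goodThreeCycle_permCongrHom_sumComm_iff _).1 ⟨h3, ⟨x, hx⟩, ⟨y, hy⟩, hconj⟩
    exact .inr ⟨u, v, w, rfl, (isConj_mixedThreeCycle_mul_iff u v w).1 hgood.2.2.2⟩

theorem GoodThreeCycle.ne {β : Perm (Fin a ⊕ Fin b)} (h : GoodThreeCycle a b β) : a ≠ b := by
  rcases h.exists_eq_mixedThreeCycle with ⟨u, v, -, -, huv⟩ | ⟨u, v, -, -, huv⟩ <;>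
    have := (u - v).isLt <;> omega

variable [NeZero a] [NeZero b]

theorem goodThreeCycle_mixedThreeCycle_of_lt (hba : b < a) :
    GoodThreeCycle a b (mixedThreeCycle ⟨b, hba⟩ 0 0) := by
  have hne : (⟨b, hba⟩ : Fin a) ≠ 0 := by simpa [Fin.ext_iff] using (NeZero.pos b).ne'
  refine ⟨isThreeCycle_mixedThreeCycle hne 0, ⟨0, ?_⟩, ⟨0, ?_⟩, ?_⟩
  · simp [mixedThreeCycle, swap_apply_def]
  · simp [mixedThreeCycle]
  · rw [isConj_mixedThreeCycle_mul_iff, sub_zero]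

theorem GoodThreeCycle.exists_eq_conj_of_lt {β : Perm (Fin a ⊕ Fin b)} (hba : b < a)
    (h : GoodThreeCycle a b β) :
    ∃ σ, Commute σ (Equiv.sumCongr (finRotate a) (finRotate b)) ∧
      β = σ * mixedThreeCycle ⟨b, hba⟩ 0 0 * σ⁻¹ := by
  rcases h.exists_eq_mixedThreeCycle with ⟨u, v, w, rfl, huv⟩ | ⟨u, v, -, -, hab⟩
  · refine ⟨_, commute_sumCongr_addRight_finRotate v w, ?_⟩
    rw [mixedThreeCycle_eq_conj, show u - v = ⟨b, hba⟩ from Fin.ext huv]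
  · have := (u - v).isLt
    omega

theorem exists_conj_of_goodThreeCycle_of_lt (hba : b < a) {β β' : Perm (Fin a ⊕ Fin b)}
    (hβ : GoodThreeCycle a b β) (hβ' : GoodThreeCycle a b β') :
    ∃ σ : Perm (Fin a ⊕ Fin b),
      σ * Equiv.sumCongr (finRotate a) (finRotate b) =
        Equiv.sumCongr (finRotate a) (finRotate b) * σ ∧ σ * β * σ⁻¹ = β' := by
  obtain ⟨σ, hσ, rfl⟩ := hβ.exists_eq_conj_of_lt hba
  obtain ⟨σ', hσ', rfl⟩ := hβ'.exists_eq_conj_of_lt hba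
  exact ⟨σ' * σ⁻¹, (hσ'.mul_left hσ.inv_left).eq, by group⟩

theorem exists_goodThreeCycle_of_ne (hab : a ≠ b) : ∃ β, GoodThreeCycle a b β := by
  rcases hab.lt_or_gt with hab | hba
  · exact ⟨_, (goodThreeCycle_permCongrHom_sumComm_iff _).2
      (goodThreeCycle_mixedThreeCycle_of_lt hab)⟩
  · exact ⟨_, goodThreeCycle_mixedThreeCycle_of_lt hba⟩

theorem exists_conj_of_goodThreeCycle (hab : a ≠ b) {β β' : Perm (Fin a ⊕ Fin b)}
    (hβ : GoodThreeCycle a b β) (hβ' : GoodThreeCycle a b β') :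
    ∃ σ : Perm (Fin a ⊕ Fin b),
      σ * Equiv.sumCongr (finRotate a) (finRotate b) =
        Equiv.sumCongr (finRotate a) (finRotate b) * σ ∧ σ * β * σ⁻¹ = β' := by
  rcases hab.lt_or_gt with hab | hba
  · set φ := (sumComm (Fin b) (Fin a)).permCongrHom
    have hα : φ (Equiv.sumCongr (finRotate b) (finRotate a)) =
        Equiv.sumCongr (finRotate a) (finRotate b) :=
      permCongr_sumComm_sumCongr _ _
    have hgood {γ} (hγ : GoodThreeCycle a b γ) : GoodThreeCycle b a (φ.symm γ) := by
      rwa [← goodThreeCycle_permCongrHom_sumComm_iff, MulEquiv.apply_symm_apply]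
    obtain ⟨σ, hσ, hconj⟩ := exists_conj_of_goodThreeCycle_of_lt hab (hgood hβ) (hgood hβ')
    refine ⟨φ σ, ?_, ?_⟩
    · rw [← hα, ← map_mul, hσ, map_mul]
    · rw [← φ.apply_symm_apply β, ← φ.apply_symm_apply β', ← hconj, map_mul, map_mul, map_inv]
  · exact exists_conj_of_goodThreeCycle_of_lt hba hβ hβ'

end Classification

/-- If `a ≠ b`, there is exactly one such 3-cycle up to simultaneous conjugation by the
centralizer of `α`; if `a = b`, there is none. -/
theorem threeCycle_ab_classification (a b : ℕ) (ha : 0 < a) (hb : 0 < b) :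
    (a ≠ b →
      (∃ β, GoodThreeCycle a b β) ∧
      ∀ β β' : Perm (Fin a ⊕ Fin b), GoodThreeCycle a b β → GoodThreeCycle a b β' →
        ∃ σ : Perm (Fin a ⊕ Fin b),
          σ * Equiv.sumCongr (finRotate a) (finRotate b) =
            Equiv.sumCongr (finRotate a) (finRotate b) * σ ∧
          σ * β * σ⁻¹ = β') ∧
    (a = b → ¬ ∃ β, GoodThreeCycle a b β) := by
  have : NeZero a := NeZero.of_pos ha
  have : NeZero b := NeZero.of_pos hb
  refine ⟨fun hab ↦ ⟨exists_goodThreeCycle_of_ne hab, fun _ _ ↦ exists_conj_of_goodThreeCycle hab⟩,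
    ?_⟩
  rintro rfl ⟨β, hβ⟩
  exact hβ.ne rfl
end

section
/- For every positive integer d, Σ_{a·m + b·n = d} m·b − Σ_{b·(m+n)=d} m·b = Σ_{d₁+d₂=d} σ₁(d₁)σ₁(d₂) − (d/2)·σ₁(d) + (d/2)·τ(d), where the first sum is over quadruples of positive integers (a,b,m,n) with am+bn=d, the second over triples (b,m,n) with b(m+n)=d, and the third over ordered pairs (d₁,d₂) of positive integers with d₁+d₂=d. -/
/-!
Both sums are regrouped by factorisations. Sending `(a, b, m, n)` to the pair of factorisations
`a * m = d₁`, `b * n = d - d₁` turns the quadruple sum into `∑ σ₁(d₁) σ₁(d₂)`, because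
`σ₁(k) = ∑_{a m = k} m = ∑_{b n = k} b`. Sending `(b, m, n)` to the factorisation `b * s = d`
with `s = m + n` and `0 < m < s`, Gauss's formula gives the inner sum
`b s (s - 1) / 2 = d (s - 1) / 2`, and summing over the factorisations of `d` gives
`(d / 2) (σ₁(d) - τ(d))`.
-/

/-- `σ₁(n) = ∑_{a ∣ n} a`, as a rational number. -/
def sigma1Q (n : ℕ) : ℚ := ∑ a ∈ n.divisors, (a : ℚ)

/-- The number of divisors `τ(n)`. -/
def tauQ (n : ℕ) : ℚ := (n.divisors.card : ℚ)

open Finset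

lemma sigma1Q_eq_sum_fst (n : ℕ) : sigma1Q n = ∑ p ∈ n.divisorsAntidiagonal, (p.1 : ℚ) :=
  (Nat.sum_divisorsAntidiagonal fun i _ => (i : ℚ)).symm

lemma sigma1Q_eq_sum_snd (n : ℕ) : sigma1Q n = ∑ p ∈ n.divisorsAntidiagonal, (p.2 : ℚ) :=
  (Nat.sum_divisorsAntidiagonal' fun _ j => (j : ℚ)).symm

lemma tauQ_eq_card_divisorsAntidiagonal (n : ℕ) : tauQ n = #n.divisorsAntidiagonal := by
  simpa [tauQ] using (Nat.sum_divisorsAntidiagonal fun _ _ => (1 : ℚ)).symm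

lemma sum_Ioo_zero_cast_mul_two {R : Type*} [Ring R] (s : ℕ) :
    (∑ m ∈ Ioo 0 s, (m : R)) * 2 = s * (s - 1) := by
  rcases s.eq_zero_or_pos with rfl | hs
  · simp
  have h := congrArg (Nat.cast (R := R)) (sum_range_id_mul_two s)
  rw [range_eq_Ico, ← Ioo_insert_left hs, sum_insert left_notMem_Ioo, zero_add] at h
  push_cast [Nat.cast_sub hs] at h
  exact h

lemma Nat.pos_and_le_of_mul_eq {a m k : ℕ} (h : a * m = k) (hk : k ≠ 0) :
    (0 < a ∧ a ≤ k) ∧ (0 < m ∧ m ≤ k) := by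
  obtain ⟨ha, hm⟩ := Nat.mul_ne_zero_iff.mp (h ▸ hk)
  exact ⟨⟨Nat.pos_of_ne_zero ha, Nat.le_of_dvd (Nat.pos_of_ne_zero hk) ⟨m, h.symm⟩⟩,
    ⟨Nat.pos_of_ne_zero hm, Nat.le_of_dvd (Nat.pos_of_ne_zero hk) ⟨a, by rw [← h, mul_comm]⟩⟩⟩

lemma sum_sigma1Q_mul_sigma1Q_eq_sum_sigma (d : ℕ) :
    ∑ k ∈ Ioo 0 d, sigma1Q k * sigma1Q (d - k) =
      ∑ x ∈ (Ioo 0 d).sigma (fun k => k.divisorsAntidiagonal ×ˢ (d - k).divisorsAntidiagonal),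
        (x.2.1.2 : ℚ) * x.2.2.1 := by
  rw [sum_sigma]
  refine sum_congr rfl fun k _ => ?_
  rw [sum_product, sigma1Q_eq_sum_snd, sigma1Q_eq_sum_fst, sum_mul_sum]

lemma sum_quadruples_eq_sum_sigma (d : ℕ) :
    ∑ q ∈ (Icc 1 d ×ˢ Icc 1 d ×ˢ Icc 1 d ×ˢ Icc 1 d).filter
          (fun q => q.1 * q.2.2.1 + q.2.1 * q.2.2.2 = d), (q.2.2.1 : ℚ) * q.2.1 =
      ∑ x ∈ (Ioo 0 d).sigma (fun k => k.divisorsAntidiagonal ×ˢ (d - k).divisorsAntidiagonal),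
        (x.2.1.2 : ℚ) * x.2.2.1 := by
  refine sum_nbij' (fun q => ⟨q.1 * q.2.2.1, (q.1, q.2.2.1), (q.2.1, q.2.2.2)⟩)
    (fun x => (x.2.1.1, x.2.2.1, x.2.1.2, x.2.2.2)) ?_ ?_ (fun _ _ => rfl) ?_ (fun _ _ => rfl)
  · rintro ⟨a, b, m, n⟩ hq
    simp only [mem_filter, mem_product, mem_Icc] at hq
    have ham : 0 < a * m := Nat.mul_pos hq.1.1.1 hq.1.2.2.1.1
    have hbn : 0 < b * n := Nat.mul_pos hq.1.2.1.1 hq.1.2.2.2.1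
    simp only [mem_sigma, mem_Ioo, mem_product, Nat.mem_divisorsAntidiagonal, true_and]
    omega
  · rintro ⟨k, ⟨a, m⟩, ⟨b, n⟩⟩ hx
    simp only [mem_sigma, mem_Ioo, mem_product, Nat.mem_divisorsAntidiagonal] at hx
    obtain ⟨⟨hk, hkd⟩, ⟨ham, hk0⟩, ⟨hbn, hdk0⟩⟩ := hx
    have := Nat.pos_and_le_of_mul_eq ham hk0
    have := Nat.pos_and_le_of_mul_eq hbn hdk0
    simp only [mem_filter, mem_product, mem_Icc]
    omega
  · rintro ⟨k, ⟨a, m⟩, ⟨b, n⟩⟩ hx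
    obtain ⟨-, ⟨rfl, -⟩, -⟩ := by
      simpa only [mem_sigma, mem_product, Nat.mem_divisorsAntidiagonal] using hx
    rfl

lemma sum_triples_eq_sum_sigma (d : ℕ) :
    ∑ t ∈ (Icc 1 d ×ˢ Icc 1 d ×ˢ Icc 1 d).filter (fun t => t.1 * (t.2.1 + t.2.2) = d),
        (t.2.1 : ℚ) * t.1 =
      ∑ x ∈ d.divisorsAntidiagonal.sigma (fun p => Ioo 0 p.2), (x.2 : ℚ) * x.1.1 := by
  refine sum_nbij' (fun t => ⟨(t.1, t.2.1 + t.2.2), t.2.1⟩) (fun x => (x.1.1, x.2, x.1.2 - x.2))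
    ?_ ?_ (fun _ _ => by simp) ?_ (fun _ _ => rfl)
  · rintro ⟨b, m, n⟩ ht
    simp only [mem_filter, mem_product, mem_Icc] at ht
    simp only [mem_sigma, mem_Ioo, Nat.mem_divisorsAntidiagonal]
    have hpos : 0 < b * (m + n) := Nat.mul_pos (by omega) (by omega)
    omega
  · rintro ⟨⟨b, s⟩, m⟩ hx
    simp only [mem_sigma, mem_Ioo, Nat.mem_divisorsAntidiagonal] at hx
    obtain ⟨⟨hbs, hd⟩, hm, hms⟩ := hx
    have := Nat.pos_and_le_of_mul_eq hbs hd
    simp only [mem_filter, mem_product, mem_Icc, Nat.add_sub_cancel' hms.le]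
    omega
  · rintro ⟨⟨b, s⟩, m⟩ hx
    have hms : m < s := (mem_Ioo.mp (mem_sigma.mp hx).2).2
    obtain ⟨t, rfl⟩ := Nat.exists_eq_add_of_le hms.le
    simp

lemma sum_divisorsAntidiagonal_sigma_Ioo_eq (d : ℕ) :
    ∑ x ∈ d.divisorsAntidiagonal.sigma (fun p => Ioo 0 p.2), (x.2 : ℚ) * x.1.1 =
      d / 2 * sigma1Q d - d / 2 * tauQ d := by
  have inner : ∀ p ∈ d.divisorsAntidiagonal,
      ∑ m ∈ Ioo 0 p.2, (m : ℚ) * p.1 = d / 2 * p.2 - d / 2 := by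
    rintro ⟨b, s⟩ hp
    have hbs : (b : ℚ) * s = d := by exact_mod_cast (Nat.mem_divisorsAntidiagonal.mp hp).1
    have gauss := sum_Ioo_zero_cast_mul_two (R := ℚ) s
    rw [← sum_mul]
    linear_combination (b / 2 : ℚ) * gauss + ((s - 1) / 2 : ℚ) * hbs
  rw [sum_sigma, sum_congr rfl inner, sum_sub_distrib, ← mul_sum, sum_const, nsmul_eq_mul,
    sigma1Q_eq_sum_snd, tauQ_eq_card_divisorsAntidiagonal]
  ring

theorem quadruple_minus_triple_sum_general (d : ℕ) :
    (∑ q ∈ (Finset.Icc 1 d ×ˢ Finset.Icc 1 d ×ˢ Finset.Icc 1 d ×ˢ Finset.Icc 1 d).filter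
          (fun q => q.1 * q.2.2.1 + q.2.1 * q.2.2.2 = d),
        (q.2.2.1 : ℚ) * (q.2.1 : ℚ)) -
      (∑ t ∈ (Finset.Icc 1 d ×ˢ Finset.Icc 1 d ×ˢ Finset.Icc 1 d).filter
          (fun t => t.1 * (t.2.1 + t.2.2) = d),
        (t.2.1 : ℚ) * (t.1 : ℚ)) =
      (∑ d₁ ∈ Finset.Ioo 0 d, sigma1Q d₁ * sigma1Q (d - d₁)) -
        (d : ℚ) / 2 * sigma1Q d + (d : ℚ) / 2 * tauQ d := by
  rw [sum_quadruples_eq_sum_sigma, ← sum_sigma1Q_mul_sigma1Q_eq_sum_sigma,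
    sum_triples_eq_sum_sigma, sum_divisorsAntidiagonal_sigma_Ioo_eq]
  ring

/-- `∑_{am+bn=d} m·b − ∑_{b(m+n)=d} m·b = ∑_{d₁+d₂=d} σ₁(d₁)σ₁(d₂) − (d/2)σ₁(d) + (d/2)τ(d)`,
where the first sum is over quadruples of positive integers `(a,b,m,n)` with `am+bn=d`,
the second over triples `(b,m,n)` with `b(m+n)=d`, and the third over ordered pairs
`(d₁,d₂)` of positive integers with `d₁+d₂=d`. -/
theorem quadruple_minus_triple_sum (d : ℕ) (hd : 0 < d) :
    (∑ q ∈ (Finset.Icc 1 d ×ˢ Finset.Icc 1 d ×ˢ Finset.Icc 1 d ×ˢ Finset.Icc 1 d).filter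
          (fun q => q.1 * q.2.2.1 + q.2.1 * q.2.2.2 = d),
        (q.2.2.1 : ℚ) * (q.2.1 : ℚ)) -
      (∑ t ∈ (Finset.Icc 1 d ×ˢ Finset.Icc 1 d ×ˢ Finset.Icc 1 d).filter
          (fun t => t.1 * (t.2.1 + t.2.2) = d),
        (t.2.1 : ℚ) * (t.1 : ℚ)) =
      (∑ d₁ ∈ Finset.Ioo 0 d, sigma1Q d₁ * sigma1Q (d - d₁)) -
        (d : ℚ) / 2 * sigma1Q d + (d : ℚ) / 2 * tauQ d :=
  quadruple_minus_triple_sum_general d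
end

section
/- The quotient ring ℂ[t, t₁, …, t_m]/(t − t₁^a, …, t − t_m^a, t₁t₂⋯t_m) has dimension m·a^{m−1} as a ℂ-vector space, for positive integers a and m. -/
/-!
Write `t = X 0` and `tᵢ = X i.succ`. Modulo `t = tᵢ^a` every monomial reduces to
`t^n t₁^{e₁} ⋯ t_m^{e_m}` with `0 ≤ eᵢ < a`. Multiplying by `t^z`, where `z` counts the `i` with
`eᵢ = 0`, replaces each missing `tᵢ` by `tᵢ^a`, so the reduced monomial is a multiple of
`t₁ ⋯ t_m` as soon as `n ≥ z`. The reduced monomials with `n < z` therefore span the quotient,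
and they are independent: the linear map sending a monomial to the indicator of its reduced form
when `n < z`, and to `0` otherwise, kills the ideal, because multiplying by `t` or by `tᵢ^a`
gives the same reduced form and multiplying by `t₁ ⋯ t_m` gives one with `n ≥ z`.
For each `i` there are `a^{m-1}` exponent vectors `e` with `eᵢ = 0`, whence `∑_e z = m a^{m-1}`.
-/

open MvPolynomial Finset Fin.NatCast

section Reduction

variable {M ι : Type*} {a : ℕ}

theorem prod_pow_eq_pow_sum_div_mul_prod_pow_mod [CommMonoid M] {x : M} {y : ι → M}
    (hy : ∀ i, y i ^ a = x) (s : Finset ι) (d : ι → ℕ) :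
    ∏ i ∈ s, y i ^ d i = x ^ (∑ i ∈ s, d i / a) * ∏ i ∈ s, y i ^ (d i % a) := by
  rw [← prod_pow_eq_pow_sum, ← prod_mul_distrib]
  refine prod_congr rfl fun i _ => ?_
  rw [← hy i, ← pow_mul, ← pow_add, Nat.div_add_mod]

theorem pow_mul_prod_pow_eq_zero [CommMonoidWithZero M] [Fintype ι] {x : M}
    {y : ι → M} (ha : 0 < a) (hy : ∀ i, y i ^ a = x) (hprod : ∏ i, y i = 0) (e : ι → ℕ)
    {n : ℕ} (hn : #{i | e i = 0} ≤ n) : x ^ n * ∏ i, y i ^ e i = 0 := by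
  obtain ⟨k, rfl⟩ := Nat.exists_eq_add_of_le hn
  -- `x ^ #{i | e i = 0}` supplies a factor `y i ^ a` exactly where `y i` is missing
  have hz : x ^ #{i | e i = 0} = ∏ i, y i ^ (if e i = 0 then a else 0) := by
    simp_rw [pow_ite, pow_zero, ← prod_filter, hy, prod_const]
  have hdvd : ∏ i, y i ∣ ∏ i, y i ^ ((if e i = 0 then a else 0) + e i) :=
    prod_dvd_prod_of_dvd _ _ fun i _ => dvd_pow_self _ (by split_ifs <;> omega)
  rw [hprod, zero_dvd_iff] at hdvd
  rw [pow_add, hz, mul_right_comm, ← prod_mul_distrib]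
  simp_rw [← pow_add, hdvd, zero_mul]

theorem card_filter_natCast_eq_zero_le_sum_div [NeZero a] [Fintype ι] (f : ι → ℕ)
    (hf : ∀ i, f i ≠ 0) : #{i | (f i : Fin a) = 0} ≤ ∑ i, f i / a := by
  rw [card_filter]
  refine sum_le_sum fun i _ => ?_
  split_ifs with h
  · exact Nat.div_pos (Nat.le_of_dvd (Nat.pos_of_ne_zero (hf i)) (Fin.natCast_eq_zero.1 h))
      (NeZero.pos a)
  · exact Nat.zero_le _

theorem sum_card_filter_apply_eq {κ : Type*} [Fintype ι] [DecidableEq ι] [Fintype κ]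
    [DecidableEq κ] (x : κ) :
    ∑ f : ι → κ, #{i | f i = x} =
      Fintype.card ι * Fintype.card κ ^ (Fintype.card ι - 1) := by
  simp_rw [card_filter]
  rw [sum_comm]
  simp_rw [← card_filter]
  have hfiber (i : ι) : #{f : ι → κ | f i = x} = Fintype.card κ ^ (Fintype.card ι - 1) := by
    simpa using Fintype.card_filter_piFinset_const (univ : Finset κ) i x
  simp [hfiber]

end Reduction

namespace ADeformation

variable (K : Type*) [CommRing K] (a m : ℕ)

def relations : Set (MvPolynomial (Fin (m + 1)) K) :=
  {p | ∃ i : Fin m, p = X 0 - X i.succ ^ a} ∪ {∏ i : Fin m, X i.succ}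

variable [NeZero a]

/-- `⟨e, n⟩` stands for the reduced monomial `t^n t₁^{e₁} ⋯ t_m^{e_m}`. -/
abbrev Key := Σ _ : Fin m → Fin a, ℕ

def standardKeys : Finset (Key a m) := univ.sigma fun e => range #{i | e i = 0}

def key (d : Fin (m + 1) →₀ ℕ) : Key a m :=
  ⟨fun i : Fin m => ((d i.succ : ℕ) : Fin a), d 0 + ∑ i : Fin m, d i.succ / a⟩

variable {K a m}

noncomputable def keyExponent (k : Key a m) : Fin (m + 1) →₀ ℕ :=
  Finsupp.equivFunOnFinite.symm (Fin.cons k.2 fun i => (k.1 i : ℕ))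

theorem key_keyExponent (k : Key a m) : key a m (keyExponent k) = k := by
  refine Sigma.ext (funext fun i => by simp [key, keyExponent]) (heq_of_eq ?_)
  simp [key, keyExponent, Nat.div_eq_of_lt (k.1 _).isLt]

theorem key_add_single_zero_eq_key_add_single_succ (d : Fin (m + 1) →₀ ℕ) (i : Fin m) :
    key a m (d + Finsupp.single 0 1) = key a m (d + Finsupp.single i.succ a) := by
  refine Sigma.ext (funext fun j => ?_) (heq_of_eq ?_)
  · by_cases hj : j = i <;> simp [key, Finsupp.single_apply, hj, Fin.succ_ne_zero, Fin.succ_inj]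
  · have hdiv (j : Fin m) :
        (d j.succ + if i = j then a else 0) / a = d j.succ / a + if i = j then 1 else 0 := by
      split_ifs <;> simp [Nat.add_div_right _ (NeZero.pos a)]
    simp [key, Finsupp.single_apply, Fin.succ_ne_zero, Fin.succ_inj, hdiv, sum_add_distrib]
    ring

theorem key_add_prod_notMem (d : Fin (m + 1) →₀ ℕ) :
    key a m (d + ∑ i : Fin m, Finsupp.single i.succ 1) ∉ standardKeys a m := by
  have hD (j : Fin (m + 1)) :
      (∑ i : Fin m, Finsupp.single i.succ 1 : Fin (m + 1) →₀ ℕ) j =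
        if j = 0 then 0 else 1 := by
    cases j using Fin.cases <;> simp [Finsupp.single_apply, Fin.succ_ne_zero, Fin.succ_inj]
  simp only [standardKeys, key, mem_sigma, mem_univ, mem_range, true_and, not_lt,
    Finsupp.add_apply, hD, Fin.succ_ne_zero, if_true, if_false]
  exact (card_filter_natCast_eq_zero_le_sum_div _ fun i => by omega).trans (Nat.le_add_left _ _)

variable (K a m)

noncomputable def keyVector (k : Key a m) : standardKeys a m → K :=
  if h : k ∈ standardKeys a m then Pi.single ⟨k, h⟩ 1 else 0

noncomputable def normalForm :
    MvPolynomial (Fin (m + 1)) K →ₗ[K] (standardKeys a m → K) :=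
  (basisMonomials _ K).constr K fun d => keyVector K a m (key a m d)

noncomputable def standardLift :
    (standardKeys a m → K) →ₗ[K] MvPolynomial (Fin (m + 1)) K :=
  Fintype.linearCombination K fun k => monomial (keyExponent k.1) 1

variable {K a m}

theorem normalForm_monomial (d : Fin (m + 1) →₀ ℕ) (c : K) :
    normalForm K a m (monomial d c) = c • keyVector K a m (key a m d) := by
  rw [← mul_one c, ← smul_eq_mul, ← smul_monomial, map_smul, smul_eq_mul, mul_one]
  exact congrArg (c • ·) ((basisMonomials _ K).constr_basis K _ d)

theorem standardLift_keyVector (k : Key a m) :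
    standardLift K a m (keyVector K a m k) =
      if k ∈ standardKeys a m then monomial (keyExponent k) 1 else 0 := by
  unfold keyVector
  split_ifs <;> simp [standardLift]

theorem normalForm_standardLift (c : standardKeys a m → K) :
    normalForm K a m (standardLift K a m c) = c := by
  suffices normalForm K a m ∘ₗ standardLift K a m = LinearMap.id from LinearMap.congr_fun this c
  refine (Pi.basisFun K _).ext fun k => ?_
  simp [standardLift, normalForm_monomial, key_keyExponent, keyVector, k.2]

theorem normalForm_mul_eq_zero {g : MvPolynomial (Fin (m + 1)) K}
    (hg : ∀ d, normalForm K a m (monomial d 1 * g) = 0) (p : MvPolynomial (Fin (m + 1)) K) :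
    normalForm K a m (p * g) = 0 := by
  suffices normalForm K a m ∘ₗ LinearMap.mulRight K g = 0 from LinearMap.congr_fun this p
  refine linearMap_ext fun d => LinearMap.ext_ring ?_
  simpa using hg d

theorem normalForm_eq_zero_of_mem_span {p : MvPolynomial (Fin (m + 1)) K}
    (hp : p ∈ Ideal.span (relations K a m)) : normalForm K a m p = 0 := by
  suffices ∀ q, normalForm K a m (q * p) = 0 by simpa using this 1
  induction hp using Submodule.span_induction with
  | mem g hg =>
    refine normalForm_mul_eq_zero fun d => ?_
    rcases hg with ⟨i, rfl⟩ | rfl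
    · rw [mul_sub, ← pow_one (X 0), ← monomial_add_single, ← monomial_add_single, map_sub,
        normalForm_monomial, normalForm_monomial, key_add_single_zero_eq_key_add_single_succ,
        sub_self]
    · have hprod : ∏ i : Fin m, (X i.succ : MvPolynomial (Fin (m + 1)) K) =
          monomial (∑ i : Fin m, Finsupp.single i.succ 1) 1 := by
        rw [monomial_sum_one]; rfl
      rw [hprod, monomial_mul, one_mul, normalForm_monomial, keyVector,
        dif_neg (key_add_prod_notMem d), smul_zero]
  | zero => simp
  | add x y _ _ hx hy => simp [mul_add, hx, hy]
  | smul r x _ hx => intro q; rw [smul_eq_mul, ← mul_assoc]; exact hx _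

section Evaluation

variable {R : Type*} [CommSemiring R] (φ : MvPolynomial (Fin (m + 1)) K →+* R)
  (hφ : ∀ i : Fin m, φ (X i.succ) ^ a = φ (X 0))
include hφ

theorem map_monomial_one_eq_pow_mul_prod (d : Fin (m + 1) →₀ ℕ) :
    φ (monomial d 1) =
      φ (X 0) ^ (key a m d).2 * ∏ i, φ (X i.succ) ^ ((key a m d).1 i : ℕ) := by
  rw [monomial_eq, C_1, one_mul, Finsupp.prod_pow, map_prod, Fin.prod_univ_succ]
  simp only [map_pow]
  rw [prod_pow_eq_pow_sum_div_mul_prod_pow_mod hφ, ← mul_assoc, ← pow_add]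
  simp [key]

theorem map_monomial_keyExponent_key (d : Fin (m + 1) →₀ ℕ) :
    φ (monomial (keyExponent (key a m d)) 1) = φ (monomial d 1) := by
  rw [map_monomial_one_eq_pow_mul_prod φ hφ, key_keyExponent,
    ← map_monomial_one_eq_pow_mul_prod φ hφ]

theorem map_monomial_eq_zero_of_key_notMem (hprod : ∏ i : Fin m, φ (X i.succ) = 0)
    {d : Fin (m + 1) →₀ ℕ} (hd : key a m d ∉ standardKeys a m) : φ (monomial d 1) = 0 := by
  rw [map_monomial_one_eq_pow_mul_prod φ hφ]
  refine pow_mul_prod_pow_eq_zero (NeZero.pos a) hφ hprod _ ?_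
  simpa [standardKeys] using hd

end Evaluation

theorem mk_standardLift_normalForm (p : MvPolynomial (Fin (m + 1)) K) :
    Ideal.Quotient.mk (Ideal.span (relations K a m)) (standardLift K a m (normalForm K a m p)) =
      Ideal.Quotient.mk (Ideal.span (relations K a m)) p := by
  set I := Ideal.span (relations K a m)
  have hpow (i : Fin m) : Ideal.Quotient.mk I (X i.succ) ^ a = Ideal.Quotient.mk I (X 0) := by
    rw [← map_pow, eq_comm, Ideal.Quotient.eq]
    exact Ideal.subset_span (Or.inl ⟨i, rfl⟩)
  have hprod : ∏ i : Fin m, Ideal.Quotient.mk I (X i.succ) = 0 := by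
    rw [← map_prod, Ideal.Quotient.eq_zero_iff_mem]
    exact Ideal.subset_span (Or.inr rfl)
  suffices (Ideal.Quotient.mkₐ K I).toLinearMap ∘ₗ standardLift K a m ∘ₗ normalForm K a m =
      (Ideal.Quotient.mkₐ K I).toLinearMap from LinearMap.congr_fun this p
  refine linearMap_ext fun d => LinearMap.ext_ring ?_
  simp only [LinearMap.comp_apply, normalForm_monomial, one_smul, standardLift_keyVector]
  split_ifs with hd
  · exact map_monomial_keyExponent_key _ hpow d
  · exact (map_monomial_eq_zero_of_key_notMem _ hpow hprod hd).symm

theorem card_standardKeys : #(standardKeys a m) = m * a ^ (m - 1) := by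
  rw [standardKeys, card_sigma]
  simpa using sum_card_filter_apply_eq (ι := Fin m) (0 : Fin a)

theorem bijective_mk_comp_standardLift :
    Function.Bijective (Ideal.Quotient.mk (Ideal.span (relations K a m)) ∘ standardLift K a m) := by
  refine ⟨fun c c' h => ?_, fun q => ?_⟩
  · have hmem := Ideal.Quotient.eq.1 h
    rw [← map_sub] at hmem
    rw [← sub_eq_zero, ← normalForm_standardLift (c - c')]
    exact normalForm_eq_zero_of_mem_span hmem
  · obtain ⟨p, rfl⟩ := Ideal.Quotient.mk_surjective q
    exact ⟨normalForm K a m p, mk_standardLift_normalForm p⟩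

end ADeformation

open ADeformation

theorem finrank_quotient_aDeformation_general (a m : ℕ) (ha : 0 < a) :
    Module.finrank ℂ
      (MvPolynomial (Fin (m + 1)) ℂ ⧸
        Ideal.span
          (({p | ∃ i : Fin m, p = X 0 - X i.succ ^ a} ∪
            {∏ i : Fin m, X i.succ}) : Set (MvPolynomial (Fin (m + 1)) ℂ))) =
      m * a ^ (m - 1) := by
  have : NeZero a := ⟨ha.ne'⟩
  calc _ = Module.finrank ℂ (standardKeys a m → ℂ) :=
        (LinearEquiv.ofBijective ((Ideal.Quotient.mkₐ ℂ _).toLinearMap ∘ₗ standardLift ℂ a m)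
          bijective_mk_comp_standardLift).finrank_eq.symm
    _ = m * a ^ (m - 1) := by
      rw [Module.finrank_fintype_fun_eq_card, Fintype.card_coe, card_standardKeys]

/-- The quotient ring `ℂ[t, t₁, …, t_m]/(t − t₁^a, …, t − t_m^a, t₁t₂⋯t_m)` has dimension
`m·a^{m−1}` as a `ℂ`-vector space. Here `t = X 0` and `tᵢ = X i.succ` in
`ℂ[X₀,…,X_m] = MvPolynomial (Fin (m+1)) ℂ`. -/
theorem finrank_quotient_aDeformation (a m : ℕ) (ha : 0 < a) (hm : 0 < m) :
    Module.finrank ℂ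
      (MvPolynomial (Fin (m + 1)) ℂ ⧸
        Ideal.span
          (({p | ∃ i : Fin m, p = X 0 - X i.succ ^ a} ∪
            {∏ i : Fin m, X i.succ}) : Set (MvPolynomial (Fin (m + 1)) ℂ))) =
      m * a ^ (m - 1) :=
  finrank_quotient_aDeformation_general a m ha
end
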